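/- Let π be a set partition of permutability d ≥ 2 with no singleton blocks, and let n = dm. For every (d−1)-tuple of permutations σ₁,…,σ_{d−1} ∈ S_m, the partition [σ₁,…,σ_{d−1}] of [n] avoids π, and distinct tuples give distinct partitions. Hence the number of partitions of [n] avoiding π with no singleton blocks is at least (m!)^{d−1} = ((n/d)!)^{d−1}. -/

import Mathlib

open Finset

/-- Two elements lie in the same block of the set partition `π`. -/
def SameBlock {n : ℕ} (π : Finpartition (univ : Finset (Fin n))) (a b : Fin n) : Prop :=
  ∃ B ∈ π.parts, a ∈ B ∧ b ∈ B

/-- Klazar containment: `π` contains `ρ` if some order-preserving injection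
realizes `ρ` as the restriction of `π`. -/
def KContains {n k : ℕ} (π : Finpartition (univ : Finset (Fin n)))
    (ρ : Finpartition (univ : Finset (Fin k))) : Prop :=
  ∃ f : Fin k ↪o Fin n, ∀ a b : Fin k, SameBlock ρ a b ↔ SameBlock π (f a) (f b)

/-- The block `T i = {i, n + σ₁ i, …, d*n + σ_d i}` (0-indexed) of the
correspondent partition `[σ₁,…,σ_d]`. -/
def corrBlock {n d : ℕ} (σ : Fin d → Equiv.Perm (Fin n)) (i : Fin n) :
    Finset (Fin ((d + 1) * n)) :=
  insert ⟨(i : ℕ), by nlinarith [i.2]⟩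
    ((univ : Finset (Fin d)).image fun (j : Fin d) =>
      (⟨((j : ℕ) + 1) * n + ((σ j i : Fin n) : ℕ), by nlinarith [j.2, (σ j i).2]⟩ :
        Fin ((d + 1) * n)))

/-- `π` is the set partition correspondent to the tuple of permutations `σ`. -/
def IsCorrespondent {n d : ℕ} (σ : Fin d → Equiv.Perm (Fin n))
    (π : Finpartition (univ : Finset (Fin ((d + 1) * n)))) : Prop :=
  π.parts = (univ : Finset (Fin n)).image (corrBlock σ)

/-- The permutability of `π` is at most `d`. -/
def HasPermLE {k : ℕ} (d : ℕ) (π : Finpartition (univ : Finset (Fin k))) : Prop :=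
  ∃ (m : ℕ) (σ : Fin d → Equiv.Perm (Fin m))
    (ρ : Finpartition (univ : Finset (Fin ((d + 1) * m)))),
    IsCorrespondent σ ρ ∧ KContains ρ π

/-- `π` has permutability exactly `d`. -/
def Permutability {k : ℕ} (π : Finpartition (univ : Finset (Fin k))) (d : ℕ) : Prop :=
  HasPermLE d π ∧ ∀ e < d, ¬ HasPermLE e π

/-- `BAvoid n π` is `B_n(π)`, the number of set partitions of `[n]` avoiding `π`. -/
noncomputable def BAvoid {k : ℕ} (n : ℕ) (π : Finpartition (univ : Finset (Fin k))) : ℕ :=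
  Nat.card {ρ : Finpartition (univ : Finset (Fin n)) // ¬ KContains ρ π}

/-- `B'_n(π)`: the number of set partitions of `[n]` with no singleton blocks avoiding `π`. -/
noncomputable def BAvoidNS {k : ℕ} (n : ℕ) (π : Finpartition (univ : Finset (Fin k))) : ℕ :=
  Nat.card {ρ : Finpartition (univ : Finset (Fin n)) //
    ¬ KContains ρ π ∧ ∀ B ∈ ρ.parts, 2 ≤ B.card}

/-- Parallel containment of tuples of permutations. -/
def ParallelContains {n m d : ℕ} (σ : Fin d → Equiv.Perm (Fin n))
    (σ' : Fin d → Equiv.Perm (Fin m)) : Prop :=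
  ∃ c : Fin m ↪o Fin n, ∀ (i : Fin d) (a b : Fin m),
    σ' i a < σ' i b ↔ σ i (c a) < σ i (c b)


/-
The correspondent partitions `[σ₁,…,σ_{d-1}]` of `[dm]` avoid `π` because `π` has permutability
`d`, and they have no singleton blocks since each block meets all `d` runs of length `m`.
Writing `[dm] ≅ [d] × [m]`, the block of `i` is the graph `q ↦ (q, τ_q i)` of the tuple
`τ = (id, σ₁, …, σ_{d-1})`, so the blocks determine the `σ`'s and the `(m!)^(d-1)` tuples give
distinct partitions.
-/

section Correspondent

variable {n d : ℕ}

lemma corrBlock_eq_image (σ : Fin d → Equiv.Perm (Fin n)) (i : Fin n) :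
    corrBlock σ i = univ.image fun q : Fin (d + 1) =>
      finProdFinEquiv (q, (Fin.cons 1 σ : Fin (d + 1) → Equiv.Perm (Fin n)) q i) := by
  rw [Fin.univ_succ, cons_eq_insert, image_insert, map_eq_image, image_image, corrBlock]
  congr 1
  refine image_congr fun j _ => Fin.ext ?_
  simp only [Function.comp_apply, Function.Embedding.coeFn_mk, Fin.cons_succ,
    finProdFinEquiv_apply_val, Fin.val_succ]
  ring

lemma finProdFinEquiv_mem_corrBlock_iff (σ : Fin d → Equiv.Perm (Fin n)) (q : Fin (d + 1))
    (r i : Fin n) :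
    finProdFinEquiv (q, r) ∈ corrBlock σ i ↔
      (Fin.cons 1 σ : Fin (d + 1) → Equiv.Perm (Fin n)) q i = r := by
  simp only [corrBlock_eq_image, mem_image, mem_univ, true_and,
    finProdFinEquiv.injective.eq_iff, Prod.mk.injEq]
  exact ⟨fun ⟨_, hq, hr⟩ => hq ▸ hr, fun h => ⟨q, rfl, h⟩⟩

lemma card_corrBlock (σ : Fin d → Equiv.Perm (Fin n)) (i : Fin n) :
    (corrBlock σ i).card = d + 1 := by
  rw [corrBlock_eq_image, card_image_of_injective, card_univ, Fintype.card_fin]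
  exact finProdFinEquiv.injective.comp fun q q' h => (Prod.mk.inj h).1

lemma existsUnique_mem_corrBlock (σ : Fin d → Equiv.Perm (Fin n)) (x : Fin ((d + 1) * n)) :
    ∃! i, x ∈ corrBlock σ i := by
  obtain ⟨⟨q, r⟩, rfl⟩ := finProdFinEquiv.surjective x
  simp only [finProdFinEquiv_mem_corrBlock_iff]
  exact ⟨_, Equiv.apply_symm_apply _ r, fun i hi => (Equiv.eq_symm_apply _).2 hi⟩

def corrPartition (σ : Fin d → Equiv.Perm (Fin n)) :
    Finpartition (univ : Finset (Fin ((d + 1) * n))) :=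
  Finpartition.ofExistsUnique (univ.image (corrBlock σ)) (fun _ _ => subset_univ _)
    (fun x _ => by
      obtain ⟨i, hi, huniq⟩ := existsUnique_mem_corrBlock σ x
      refine ⟨corrBlock σ i, ⟨mem_image_of_mem _ (mem_univ i), hi⟩, ?_⟩
      rintro _ ⟨hB, hxB⟩
      obtain ⟨j, -, rfl⟩ := mem_image.1 hB
      rw [huniq j hxB])
    (fun h => by
      obtain ⟨i, -, hi⟩ := mem_image.1 h
      simpa [hi] using card_corrBlock σ i)

lemma isCorrespondent_corrPartition (σ : Fin d → Equiv.Perm (Fin n)) :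
    IsCorrespondent σ (corrPartition σ) :=
  rfl

lemma IsCorrespondent.two_le_card {σ : Fin d → Equiv.Perm (Fin n)}
    {ρ : Finpartition (univ : Finset (Fin ((d + 1) * n)))} (hρ : IsCorrespondent σ ρ)
    (hd : 0 < d) {B : Finset (Fin ((d + 1) * n))} (hB : B ∈ ρ.parts) : 2 ≤ B.card := by
  rw [hρ] at hB
  obtain ⟨i, -, rfl⟩ := mem_image.1 hB
  rw [card_corrBlock]
  omega

lemma IsCorrespondent.perm_eq {σ σ' : Fin d → Equiv.Perm (Fin n)}
    {ρ : Finpartition (univ : Finset (Fin ((d + 1) * n)))}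
    (hσ : IsCorrespondent σ ρ) (hσ' : IsCorrespondent σ' ρ) : σ = σ' := by
  funext j
  ext i
  have h0 := (finProdFinEquiv_mem_corrBlock_iff σ 0 i i).2 rfl
  have h0' := (finProdFinEquiv_mem_corrBlock_iff σ' 0 i i).2 rfl
  have hblock : corrBlock σ i = corrBlock σ' i :=
    ρ.eq_of_mem_parts (hσ ▸ mem_image_of_mem _ (mem_univ i))
      (hσ' ▸ mem_image_of_mem _ (mem_univ i)) h0 h0'
  have hj := (finProdFinEquiv_mem_corrBlock_iff σ j.succ (σ j i) i).2 (by rw [Fin.cons_succ])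
  rw [hblock, finProdFinEquiv_mem_corrBlock_iff, Fin.cons_succ] at hj
  exact congrArg Fin.val hj.symm

end Correspondent

lemma Permutability.not_kContains_of_isCorrespondent {k d e m : ℕ}
    {π : Finpartition (univ : Finset (Fin k))} (hπ : Permutability π d) (he : e < d)
    {σ : Fin e → Equiv.Perm (Fin m)} {ρ : Finpartition (univ : Finset (Fin ((e + 1) * m)))}
    (hρ : IsCorrespondent σ ρ) : ¬ KContains ρ π :=
  fun hc => hπ.2 e he ⟨m, σ, ρ, hρ, hc⟩

lemma factorial_pow_le_bAvoidNS {k e m : ℕ} {π : Finpartition (univ : Finset (Fin k))}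
    (he : 0 < e) (havoid : ∀ σ : Fin e → Equiv.Perm (Fin m), ¬ KContains (corrPartition σ) π) :
    m.factorial ^ e ≤ BAvoidNS ((e + 1) * m) π := by
  let F : (Fin e → Equiv.Perm (Fin m)) →
      {ρ : Finpartition (univ : Finset (Fin ((e + 1) * m))) //
        ¬ KContains ρ π ∧ ∀ B ∈ ρ.parts, 2 ≤ B.card} := fun σ =>
    ⟨corrPartition σ, havoid σ, fun _ hB =>
      (isCorrespondent_corrPartition σ).two_le_card he hB⟩
  have hF : F.Injective := fun σ σ' h => by
    have hρ : corrPartition σ = corrPartition σ' := congrArg Subtype.val h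
    exact (isCorrespondent_corrPartition σ).perm_eq (hρ ▸ isCorrespondent_corrPartition σ')
  calc m.factorial ^ e = Nat.card (Fin e → Equiv.Perm (Fin m)) := by
        simp [Nat.card_eq_fintype_card, Fintype.card_perm]
    _ ≤ BAvoidNS ((e + 1) * m) π := Nat.card_le_card_of_injective F hF

theorem stmt8_general (k d m : ℕ) (hd : 2 ≤ d) (π : Finpartition (univ : Finset (Fin k)))
    (hperm : Permutability π d) :
    (∀ (σ : Fin (d - 1) → Equiv.Perm (Fin m))
        (ρ : Finpartition (univ : Finset (Fin ((d - 1 + 1) * m)))),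
      IsCorrespondent σ ρ → ¬ KContains ρ π) ∧
    (∀ (σ σ' : Fin (d - 1) → Equiv.Perm (Fin m))
        (ρ ρ' : Finpartition (univ : Finset (Fin ((d - 1 + 1) * m)))),
      IsCorrespondent σ ρ → IsCorrespondent σ' ρ' → ρ = ρ' → σ = σ') ∧
    (Nat.factorial m) ^ (d - 1) ≤ BAvoidNS ((d - 1 + 1) * m) π := by
  have havoid : ∀ (σ : Fin (d - 1) → Equiv.Perm (Fin m))
      (ρ : Finpartition (univ : Finset (Fin ((d - 1 + 1) * m)))),
      IsCorrespondent σ ρ → ¬ KContains ρ π :=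
    fun _ _ hρ => hperm.not_kContains_of_isCorrespondent (by omega) hρ
  refine ⟨havoid, fun σ σ' ρ _ hσ hσ' hρ => hσ.perm_eq (hρ ▸ hσ'), ?_⟩
  exact factorial_pow_le_bAvoidNS (by omega) fun σ => havoid σ _ (isCorrespondent_corrPartition σ)

/-- if `pm(π) = d ≥ 2` and `π` has no singleton blocks, every
correspondent partition `[σ₁,…,σ_{d-1}]` of `[dm]` avoids `π`, distinct tuples give
distinct partitions, and hence there are at least `(m!)^(d-1)` singleton-free
partitions of `[dm]` avoiding `π`. -/
theorem stmt8 (k d m : ℕ) (hd : 2 ≤ d) (π : Finpartition (univ : Finset (Fin k)))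
    (hperm : Permutability π d) (hπ : ∀ B ∈ π.parts, 2 ≤ B.card) :
    (∀ (σ : Fin (d - 1) → Equiv.Perm (Fin m))
        (ρ : Finpartition (univ : Finset (Fin ((d - 1 + 1) * m)))),
      IsCorrespondent σ ρ → ¬ KContains ρ π) ∧
    (∀ (σ σ' : Fin (d - 1) → Equiv.Perm (Fin m))
        (ρ ρ' : Finpartition (univ : Finset (Fin ((d - 1 + 1) * m)))),
      IsCorrespondent σ ρ → IsCorrespondent σ' ρ' → ρ = ρ' → σ = σ') ∧
    (Nat.factorial m) ^ (d - 1) ≤ BAvoidNS ((d - 1 + 1) * m) π :=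
  stmt8_general k d m hd π hperm
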